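/- (Theorem 1, sequential update with Lipschitz gradient.) Let K ⊆ ℝⁿ be a closed convex cone with dual cone K*, let μ > 0, and let ψ : ℝⁿ → ℝ be concave, differentiable, with ∇ψ Lipschitz continuous with constant 1/μ in the Euclidean norm, ψ(0) = 0, and gradient antitone on K: whenever u, v ∈ K and u − v ∈ K, ∇ψ(v) − ∇ψ(u) ∈ K*. For t ∈ {1,…,m} let F_t ⊆ ℝᵏ and A_t : ℝᵏ → ℝⁿ linear with A_t x ∈ K for all x ∈ F_t. Set u₀ = 0 and u_t = ∑_{s=1}^t A_s x̂_s, and suppose x̂_t ∈ F_t satisfies ⟨x̂_t, A_tᵀ ∇ψ(u_{t−1})⟩ ≥ ⟨x, A_tᵀ ∇ψ(u_{t−1})⟩ for all x ∈ F_t. Let ᾱ ∈ ℝ satisfy ⟨∇ψ(u), u⟩ ≥ (ᾱ + 1)·ψ(u) for every u ∈ K. Then for every choice of x'_t ∈ F_t and every w ∈ ℝⁿ: (1 − ᾱ)·ψ(u_m) ≥ ∑_{t=1}^m ⟨A_t x'_t, ∇ψ(u_m)⟩ − ⟨∇ψ(u_m), w⟩ + ψ(w) − (1/(2μ)) ∑_{t=1}^m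 ‖A_t x̂_t‖². (This says P_seq ≥ (1/(1 − ᾱ_ψ))·(D★ − (1/(2μ))∑_t ‖A_t x̂_t‖²).) -/

import Mathlib

/-!
Each greedy step is compared with the competitor `x'_t`. The descent lemma for a gradient
that is `1/μ`-Lipschitz bounds the gain `ψ(u_{t+1}) - ψ(u_t)` from below by
`⟨A_t x̂_t, ∇ψ(u_t)⟩ - ‖A_t x̂_t‖² / (2μ)`. The greedy choice replaces `x̂_t` by `x'_t`, and since
`u_m - u_t ∈ K`, antitonicity of `∇ψ` replaces `∇ψ(u_t)` by `∇ψ(u_m)`. Telescoping bounds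
`∑_t ⟨A_t x'_t, ∇ψ(u_m)⟩ - (1/2μ) ∑_t ‖A_t x̂_t‖²` by `ψ(u_m)`. The supergradient inequality
`ψ(w) ≤ ψ(u_m) + ⟨∇ψ(u_m), w - u_m⟩` and `⟨∇ψ(u_m), u_m⟩ ≥ (ᾱ + 1) ψ(u_m)` then finish the proof.
-/

open RealInnerProductSpace

/-- The dual cone of a set `K`. -/
def dualCone {n : ℕ} (K : Set (EuclideanSpace ℝ (Fin n))) :
    Set (EuclideanSpace ℝ (Fin n)) :=
  {y | ∀ u ∈ K, 0 ≤ ⟪y, u⟫}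

section Gradient

variable {E : Type*} [NormedAddCommGroup E] [InnerProductSpace ℝ E] [CompleteSpace E]
  {f : E → ℝ} {x y : E}

theorem HasGradientAt.hasDerivAt_comp_lineMap {f' : E} {t : ℝ}
    (hf : HasGradientAt f f' (AffineMap.lineMap x y t)) :
    HasDerivAt (fun s : ℝ => f (AffineMap.lineMap x y s)) ⟪f', y - x⟫ t := by
  have h := hf.hasFDerivAt.comp_hasDerivAt t AffineMap.hasDerivAt_lineMap
  simp only [InnerProductSpace.toDual_apply_apply] at h
  exact h

theorem ConcaveOn.le_add_inner_of_hasGradientAt {f' : E} (hf : ConcaveOn ℝ Set.univ f)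
    (hf' : HasGradientAt f f' x) (y : E) : f y ≤ f x + ⟪f', y - x⟫ := by
  have hline : ConcaveOn ℝ Set.univ (fun s : ℝ => f (AffineMap.lineMap x y s)) :=
    hf.comp_affineMap (AffineMap.lineMap x y)
  have hslope := hline.slope_le_of_hasDerivAt (Set.mem_univ 0) (Set.mem_univ 1) one_pos
    (HasGradientAt.hasDerivAt_comp_lineMap (t := 0) (by simpa using hf'))
  simp only [slope_def_field, AffineMap.lineMap_apply_one, AffineMap.lineMap_apply_zero] at hslope
  linarith

theorem add_inner_sub_sq_le_of_lipschitz_gradient {f' : E → E} {L : ℝ}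
    (hf : ∀ x, HasGradientAt f (f' x) x) (hlip : ∀ x y, ‖f' x - f' y‖ ≤ L * ‖x - y‖)
    (x y : E) : f x + ⟪f' x, y - x⟫ - L / 2 * ‖y - x‖ ^ 2 ≤ f y := by
  set h : ℝ → ℝ := fun s => f (AffineMap.lineMap x y s) - s * ⟪f' x, y - x⟫ +
    L / 2 * s ^ 2 * ‖y - x‖ ^ 2
  have hderiv : ∀ s : ℝ, HasDerivAt h
      (⟪f' (AffineMap.lineMap x y s) - f' x, y - x⟫ + L * s * ‖y - x‖ ^ 2) s := by
    intro s
    have := (((hf (AffineMap.lineMap x y s)).hasDerivAt_comp_lineMap.sub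
      ((hasDerivAt_id s).mul_const ⟪f' x, y - x⟫)).add
      (((hasDerivAt_pow 2 s).const_mul (L / 2)).mul_const (‖y - x‖ ^ 2)))
    refine this.congr_deriv ?_
    simp only [inner_sub_left]
    ring
  have hderiv_nonneg : ∀ s, 0 ≤ s →
      0 ≤ ⟪f' (AffineMap.lineMap x y s) - f' x, y - x⟫ + L * s * ‖y - x‖ ^ 2 := by
    intro s hs
    have hclose : ‖f' (AffineMap.lineMap x y s) - f' x‖ ≤ L * (s * ‖y - x‖) := by
      simpa [← vsub_eq_sub, AffineMap.lineMap_vsub_left, norm_smul, abs_of_nonneg hs]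
        using hlip (AffineMap.lineMap x y s) x
    have := (abs_real_inner_le_norm (f' (AffineMap.lineMap x y s) - f' x) (y - x)).trans
      (mul_le_mul_of_nonneg_right hclose (norm_nonneg _))
    nlinarith [neg_abs_le ⟪f' (AffineMap.lineMap x y s) - f' x, y - x⟫]
  have hmono : MonotoneOn h (Set.Ici 0) :=
    monotoneOn_of_hasDerivWithinAt_nonneg (convex_Ici 0)
      (fun s _ => (hderiv s).continuousAt.continuousWithinAt)
      (fun s _ => (hderiv s).hasDerivWithinAt)
      (fun s hs => hderiv_nonneg s (interior_subset hs))
  have := hmono Set.self_mem_Ici (Set.mem_Ici.mpr zero_le_one) zero_le_one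
  simp only [h, AffineMap.lineMap_apply_zero, AffineMap.lineMap_apply_one] at this
  linarith

theorem inner_sub_sq_le_sub_of_greedy {f' : E → E} {L : ℝ}
    (hf : ∀ x, HasGradientAt f (f' x) x) (hlip : ∀ x y, ‖f' x - f' y‖ ≤ L * ‖x - y‖)
    {p z : E} (hgreedy : ⟪p, f' x⟫ ≤ ⟪y - x, f' x⟫) (hmono : 0 ≤ ⟪f' x - f' z, p⟫) :
    ⟪p, f' z⟫ - L / 2 * ‖y - x‖ ^ 2 ≤ f y - f x := by
  have hdescent := add_inner_sub_sq_le_of_lipschitz_gradient hf hlip x y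
  rw [real_inner_comm (f' x) (y - x)] at hgreedy
  rw [inner_sub_left, real_inner_comm p, real_inner_comm p] at hmono
  linarith

end Gradient

section Cone

variable {E : Type*} [AddCommGroup E] [Module ℝ E] {K : Set E}

theorem Convex.add_mem_of_smul_mem (hK : Convex ℝ K)
    (hcone : ∀ c : ℝ, 0 < c → ∀ u ∈ K, c • u ∈ K) {a b : E} (ha : a ∈ K) (hb : b ∈ K) :
    a + b ∈ K := by
  have hmid : (1 / 2 : ℝ) • a + (1 / 2 : ℝ) • b ∈ K :=
    hK ha hb (by norm_num) (by norm_num) (by norm_num)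
  simpa [smul_add, smul_smul] using hcone 2 two_pos _ hmid

theorem Convex.sum_mem_of_smul_mem (hK : Convex ℝ K)
    (hcone : ∀ c : ℝ, 0 < c → ∀ u ∈ K, c • u ∈ K) (h0 : (0 : E) ∈ K) {ι : Type*}
    {s : Finset ι} {v : ι → E} (hv : ∀ i ∈ s, v i ∈ K) : ∑ i ∈ s, v i ∈ K :=
  Finset.sum_induction v (· ∈ K) (fun _ _ => hK.add_mem_of_smul_mem hcone) h0 hv

theorem IsClosed.zero_mem_of_smul_mem [TopologicalSpace E] [ContinuousSMul ℝ E]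
    (hK : IsClosed K) (hcone : ∀ c : ℝ, 0 < c → ∀ u ∈ K, c • u ∈ K) {v : E} (hv : v ∈ K) :
    (0 : E) ∈ K := by
  have hlim : Filter.Tendsto (fun c : ℝ => c • v) (nhdsWithin 0 (Set.Ioi 0)) (nhds 0) := by
    simpa using (Filter.tendsto_id.mono_left nhdsWithin_le_nhds :
      Filter.Tendsto id (nhdsWithin (0 : ℝ) (Set.Ioi 0)) (nhds 0)).smul_const v
  exact hK.mem_of_tendsto hlim (eventually_nhdsWithin_of_forall fun c hc => hcone c hc v hv)

end Cone

theorem stmt_5_general {n k m : ℕ}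
    (K : Set (EuclideanSpace ℝ (Fin n)))
    (hKclosed : IsClosed K) (hKconvex : Convex ℝ K)
    (hKcone : ∀ c : ℝ, 0 < c → ∀ u ∈ K, c • u ∈ K)
    (μ : ℝ)
    (ψ : EuclideanSpace ℝ (Fin n) → ℝ)
    (hψ : ConcaveOn ℝ Set.univ ψ) (hψ0 : ψ 0 = 0)
    (g : EuclideanSpace ℝ (Fin n) → EuclideanSpace ℝ (Fin n))
    (hg : ∀ u, HasGradientAt ψ (g u) u)
    (hlip : ∀ u u', ‖g u - g u'‖ ≤ (1 / μ) * ‖u - u'‖)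
    (hantitone : ∀ u ∈ K, ∀ v ∈ K, u - v ∈ K → g v - g u ∈ dualCone K)
    (F : ℕ → Set (EuclideanSpace ℝ (Fin k)))
    (A : ℕ → EuclideanSpace ℝ (Fin k) →ₗ[ℝ] EuclideanSpace ℝ (Fin n))
    (hA : ∀ t < m, ∀ x ∈ F t, A t x ∈ K)
    (xt : ℕ → EuclideanSpace ℝ (Fin k))
    (hxt : ∀ t < m, xt t ∈ F t)
    (u : ℕ → EuclideanSpace ℝ (Fin n))
    (hu : ∀ t, u t = ∑ s ∈ Finset.range t, A s (xt s))
    (hmax : ∀ t < m, ∀ x ∈ F t, ⟪A t x, g (u t)⟫ ≤ ⟪A t (xt t), g (u t)⟫)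
    (α : ℝ)
    (hα : ∀ v ∈ K, (α + 1) * ψ v ≤ ⟪g v, v⟫)
    (x' : ℕ → EuclideanSpace ℝ (Fin k))
    (hx' : ∀ t < m, x' t ∈ F t)
    (w : EuclideanSpace ℝ (Fin n)) :
    (∑ t ∈ Finset.range m, ⟪A t (x' t), g (u m)⟫) - ⟪g (u m), w⟫ + ψ w -
        (1 / (2 * μ)) * ∑ t ∈ Finset.range m, ‖A t (xt t)‖ ^ 2 ≤
      (1 - α) * ψ (u m) := by
  rcases Nat.eq_zero_or_pos m with rfl | hm
  · simpa [hu, hψ0] using hψ.le_add_inner_of_hasGradientAt (hg 0) w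
  have h0K : (0 : EuclideanSpace ℝ (Fin n)) ∈ K :=
    hKclosed.zero_mem_of_smul_mem hKcone (hA 0 hm _ (hx' 0 hm))
  have hsumK : ∀ s ⊆ Finset.range m, ∑ t ∈ s, A t (xt t) ∈ K := fun s hs =>
    hKconvex.sum_mem_of_smul_mem hKcone h0K fun t ht =>
      have ht : t < m := Finset.mem_range.mp (hs ht)
      hA t ht _ (hxt t ht)
  have huK : ∀ t ≤ m, u t ∈ K := fun t ht =>
    hu t ▸ hsumK _ (Finset.range_subset_range.mpr ht)
  have hstep : ∀ t < m, ⟪A t (x' t), g (u m)⟫ - 1 / (2 * μ) * ‖A t (xt t)‖ ^ 2 ≤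
      ψ (u (t + 1)) - ψ (u t) := by
    intro t ht
    have hincr : u (t + 1) - u t = A t (xt t) := by
      rw [hu, hu, Finset.sum_range_succ, add_sub_cancel_left]
    have hrest : u m - u t ∈ K := by
      rw [hu, hu, ← Finset.sum_Ico_eq_sub _ ht.le]
      exact hsumK _ fun s hs => Finset.mem_range.mpr (Finset.mem_Ico.mp hs).2
    have hanti := hantitone _ (huK m le_rfl) _ (huK t ht.le) hrest _ (hA t ht _ (hx' t ht))
    have := inner_sub_sq_le_sub_of_greedy hg hlip (hincr ▸ hmax t ht _ (hx' t ht)) hanti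
    rwa [hincr, show 1 / μ / 2 = 1 / (2 * μ) by ring] at this
  have htelescope := calc
    ∑ t ∈ Finset.range m, (⟪A t (x' t), g (u m)⟫ - 1 / (2 * μ) * ‖A t (xt t)‖ ^ 2)
      ≤ ∑ t ∈ Finset.range m, (ψ (u (t + 1)) - ψ (u t)) :=
        Finset.sum_le_sum fun t ht => hstep t (Finset.mem_range.mp ht)
    _ = ψ (u m) := by
        rw [Finset.sum_range_sub (fun t => ψ (u t)), hu 0, Finset.sum_range_zero, hψ0, sub_zero]
  have hsupport := hψ.le_add_inner_of_hasGradientAt (hg (u m)) w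
  have hα_m := hα (u m) (huK m le_rfl)
  rw [Finset.sum_sub_distrib, ← Finset.mul_sum] at htelescope
  rw [inner_sub_right] at hsupport
  linarith

/-- Theorem 1, sequential update, for differentiable `ψ` with
`(1/μ)`-Lipschitz and antitone (on `K`) gradient `g`. -/
theorem stmt_5 {n k m : ℕ}
    (K : Set (EuclideanSpace ℝ (Fin n)))
    (hKclosed : IsClosed K) (hKconvex : Convex ℝ K)
    (hKcone : ∀ c : ℝ, 0 < c → ∀ u ∈ K, c • u ∈ K)
    (μ : ℝ) (hμ : 0 < μ)
    (ψ : EuclideanSpace ℝ (Fin n) → ℝ)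
    (hψ : ConcaveOn ℝ Set.univ ψ) (hψ0 : ψ 0 = 0)
    (g : EuclideanSpace ℝ (Fin n) → EuclideanSpace ℝ (Fin n))
    (hg : ∀ u, HasGradientAt ψ (g u) u)
    (hlip : ∀ u u', ‖g u - g u'‖ ≤ (1 / μ) * ‖u - u'‖)
    (hantitone : ∀ u ∈ K, ∀ v ∈ K, u - v ∈ K → g v - g u ∈ dualCone K)
    (F : ℕ → Set (EuclideanSpace ℝ (Fin k)))
    (A : ℕ → EuclideanSpace ℝ (Fin k) →ₗ[ℝ] EuclideanSpace ℝ (Fin n))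
    (hA : ∀ t < m, ∀ x ∈ F t, A t x ∈ K)
    (xt : ℕ → EuclideanSpace ℝ (Fin k))
    (hxt : ∀ t < m, xt t ∈ F t)
    (u : ℕ → EuclideanSpace ℝ (Fin n))
    (hu : ∀ t, u t = ∑ s ∈ Finset.range t, A s (xt s))
    (hmax : ∀ t < m, ∀ x ∈ F t, ⟪A t x, g (u t)⟫ ≤ ⟪A t (xt t), g (u t)⟫)
    (α : ℝ)
    (hα : ∀ v ∈ K, (α + 1) * ψ v ≤ ⟪g v, v⟫)
    (x' : ℕ → EuclideanSpace ℝ (Fin k))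
    (hx' : ∀ t < m, x' t ∈ F t)
    (w : EuclideanSpace ℝ (Fin n)) :
    (∑ t ∈ Finset.range m, ⟪A t (x' t), g (u m)⟫) - ⟪g (u m), w⟫ + ψ w -
        (1 / (2 * μ)) * ∑ t ∈ Finset.range m, ‖A t (xt t)‖ ^ 2 ≤
      (1 - α) * ψ (u m) :=
  stmt_5_general K hKclosed hKconvex hKcone μ ψ hψ hψ0 g hg hlip hantitone F A hA xt hxt u hu hmax α
    hα x' hx' w
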